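/- arXiv:2212.01024 — 2 statements merged into one kernel-verified Lean document; each statement's English description precedes it below -/
import Mathlib

section
/- Suppose the language L has no strong bispecial word. Then for every x ∈ X_L there exists m ∈ ℕ such that the infinite suffix (x_n)_{n ≥ m} is right recurrent and the infinite prefix (x_n)_{n ≤ -m} is left recurrent. -/
open List Set

variable {A : Type*}

/-- A (factorial, extendable) language over an alphabet `A`. -/
def IsLanguage (L : Set (List A)) : Prop :=
  (∀ w ∈ L, ∀ v : List A, v <:+: w → v ∈ L) ∧
  (∀ w ∈ L, ∃ a : A, a :: w ∈ L) ∧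
  (∀ w ∈ L, ∃ a : A, w ++ [a] ∈ L)

/-- Arrival set `A(w)`. -/
def arrSet (L : Set (List A)) (w : List A) : Set A := {a | a :: w ∈ L}

/-- Departure set `D(w)`. -/
def depSet (L : Set (List A)) (w : List A) : Set A := {a | w ++ [a] ∈ L}

def Bispecial (L : Set (List A)) (w : List A) : Prop :=
  1 < (arrSet L w).ncard ∧ 1 < (depSet L w).ncard

/-- `m(w) = #{awb ∈ L}`. -/
noncomputable def extCount (L : Set (List A)) (w : List A) : ℕ :=
  {p : A × A | p.1 :: (w ++ [p.2]) ∈ L}.ncard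

def StrongBispecial (L : Set (List A)) (w : List A) : Prop :=
  Bispecial L w ∧ (arrSet L w).ncard + (depSet L w).ncard - 1 < extCount L w

def WeakBispecial (L : Set (List A)) (w : List A) : Prop :=
  Bispecial L w ∧ extCount L w < (arrSet L w).ncard + (depSet L w).ncard - 1

def LocallyStrongBispecial (L : Set (List A)) (w : List A) : Prop :=
  Bispecial L w ∧ ∃ A' D' : Set A, A'.Nonempty ∧ D'.Nonempty ∧
    A' ⊆ arrSet L w ∧ D' ⊆ depSet L w ∧
    A'.ncard + D'.ncard - 1 <
      {p : A × A | p.1 ∈ A' ∧ p.2 ∈ D' ∧ p.1 :: (w ++ [p.2]) ∈ L}.ncard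

/-- The order condition at a single bispecial word, for orders `rA`, `rD`. -/
def OrderConditionAt (L : Set (List A)) (w : List A) (rA rD : A → A → Prop) : Prop :=
  ∀ a b c d : A, a ≠ b → c ≠ d →
    a :: (w ++ [c]) ∈ L → b :: (w ++ [d]) ∈ L → (rA a b ↔ rD c d)

/-- The local order condition. -/
def LocalOrderCondition (L : Set (List A)) : Prop :=
  ∀ w : List A, Bispecial L w → ∃ rA rD : A → A → Prop,
    IsStrictTotalOrder A rA ∧ IsStrictTotalOrder A rD ∧ OrderConditionAt L w rA rD

/-- `a` and `a'` are consecutive in the strict order `r`. -/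
def ConsecutiveIn (r : A → A → Prop) (a a' : A) : Prop :=
  r a a' ∧ ∀ c : A, ¬ (r a c ∧ r c a')

/-- A connection for the bispecial word `w`, with respect to orders `rA`, `rD`. -/
def ConnectionWith (L : Set (List A)) (w : List A) (rA rD : A → A → Prop) : Prop :=
  ∃ a a' b b' : A, ConsecutiveIn rA a a' ∧ ConsecutiveIn rD b b' ∧
    a :: (w ++ [b]) ∈ L ∧ a' :: (w ++ [b']) ∈ L ∧
    a :: (w ++ [b']) ∉ L ∧ a' :: (w ++ [b]) ∉ L

/-- `w` has a connection (for some orders realizing the order condition at `w`). -/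
def HasConnection (L : Set (List A)) (w : List A) : Prop :=
  ∃ rA rD : A → A → Prop, IsStrictTotalOrder A rA ∧ IsStrictTotalOrder A rD ∧
    OrderConditionAt L w rA rD ∧ ConnectionWith L w rA rD

/-- Complexity function `p(n)`. -/
noncomputable def complexityFn (L : Set (List A)) (n : ℕ) : ℕ :=
  {w ∈ L | w.length = n}.ncard

def UniformlyRecurrent (L : Set (List A)) : Prop :=
  ∀ v ∈ L, ∃ n : ℕ, ∀ u ∈ L, u.length = n → v <:+: u

def LangRecurrent (L : Set (List A)) : Prop :=
  ∀ v ∈ L, ∃ u : List A, u ≠ [] ∧ v ++ u ∈ L ∧ v <:+ v ++ u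

def LangAperiodic (L : Set (List A)) : Prop :=
  ∀ w ∈ L, w ≠ [] → ∃ n : ℕ, (List.replicate n w).flatten ∉ L

def LeftSpecial (L : Set (List A)) (w : List A) : Prop := 1 < (arrSet L w).ncard

def RightSpecial (L : Set (List A)) (w : List A) : Prop := 1 < (depSet L w).ncard

/-- The two-sided subshift associated to `L`. -/
def XL (L : Set (List A)) : Set (ℤ → A) :=
  {x | ∀ (m : ℤ) (n : ℕ), (List.ofFn fun i : Fin n => x (m + (i : ℕ))) ∈ L}

def occursAtZ (x : ℤ → A) (m : ℤ) (w : List A) : Prop :=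
  (List.ofFn fun i : Fin w.length => x (m + (i : ℕ))) = w

def FactorsZ (x : ℤ → A) : Set (List A) := {w | ∃ m : ℤ, occursAtZ x m w}

def RightRec (x : ℤ → A) : Prop :=
  ∀ w ∈ FactorsZ x, ∀ N : ℤ, ∃ m : ℤ, N ≤ m ∧ occursAtZ x m w

def LeftRec (x : ℤ → A) : Prop :=
  ∀ w ∈ FactorsZ x, ∀ N : ℤ, ∃ m : ℤ, m ≤ N ∧ occursAtZ x m w

def RecurrentZ (x : ℤ → A) : Prop := RightRec x ∧ LeftRec x

/-- The `F`-flipped order condition, with orders `rA` (arrival) and `rD` (departure):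
the departure order is reversed when the number of `F`-letters of `w` is odd. -/
def FlippedOC [DecidableEq A] (L : Set (List A)) (F : Finset A)
    (rA rD : A → A → Prop) : Prop :=
  ∀ w : List A, Bispecial L w → ∀ a b c d : A, a ≠ b → c ≠ d →
    a :: (w ++ [c]) ∈ L → b :: (w ++ [d]) ∈ L →
    (rA a b ↔ if Even (w.countP fun e => decide (e ∈ F)) then rD c d else rD d c)

/-- A generalized `F`-flipped interval exchange transformation. -/
structure GIET (A : Type*) (F : Finset A) where
  l : A → ℝ
  r : A → ℝ
  T : ℝ → ℝ
  lt : ∀ e, l e < r e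
  sub : ∀ e, Set.Ioo (l e) (r e) ⊆ Set.Ioo (0 : ℝ) 1
  disj : ∀ e f, e ≠ f → Disjoint (Set.Ioo (l e) (r e)) (Set.Ioo (l f) (r f))
  cover : Set.Icc (0 : ℝ) 1 = ⋃ e, Set.Icc (l e) (r e)
  cont : ∀ e, ContinuousOn T (Set.Ioo (l e) (r e))
  inc : ∀ e ∉ F, StrictMonoOn T (Set.Ioo (l e) (r e))
  dec : ∀ e ∈ F, StrictAntiOn T (Set.Ioo (l e) (r e))
  l' : A → ℝ
  r' : A → ℝ
  lt' : ∀ e, l' e < r' e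
  img : ∀ e, T '' Set.Ioo (l e) (r e) = Set.Ioo (l' e) (r' e)
  disj' : ∀ e f, e ≠ f → Disjoint (Set.Ioo (l' e) (r' e)) (Set.Ioo (l' f) (r' f))
  cover' : Set.Icc (0 : ℝ) 1 = ⋃ e, Set.Icc (l' e) (r' e)

variable {F : Finset A}

/-- A bi-infinite orbit of `G`, with symbolic itinerary `u`. -/
def GIET.IsOrbit (G : GIET A F) (u : ℤ → A) (p : ℤ → ℝ) : Prop :=
  (∀ n : ℤ, G.T (p n) = p (n + 1)) ∧
  ∀ n : ℤ, p n ∈ Set.Ioo (G.l (u n)) (G.r (u n))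

/-- The natural coding `L(T)`: the language generated by all trajectories. -/
def GIET.lang (G : GIET A F) : Set (List A) :=
  {w | ∃ (u : ℤ → A) (p : ℤ → ℝ), G.IsOrbit u p ∧
    ∃ m : ℤ, (List.ofFn fun i : Fin w.length => u (m + (i : ℕ))) = w}

/-! Write `s(n) = p(n+1) - p(n)` as the sum of `#D(w) - 1` over words of length `n`.
Then `s(n+1) - s(n)` is the sum of the bilateral multiplicities `m(w) - #A(w) - #D(w) + 1`,
which are `≤ 0` when there is no strong bispecial word. So `s` is eventually constant, after which
every long right special word has a right special left extension; the number of right special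
words of length `n` is then eventually constant, i.e. long right special words are suffixes of
finitely many left-infinite words.

If no suffix of `x` were right recurrent, the longest recurrent word starting at `q` would be right
special, with length tending to infinity. By pigeonhole, two of them, at `q₀` and at `q₁` far to
the right, lie on the same branch and are followed by the same letter, so the non-recurrent word
one letter longer at `q₀` reappears after `q₁`: a contradiction. Left recurrence follows by
reversing `L` and `x`. -/

section Language

variable {L : Set (List A)}

lemma IsLanguage.mem_of_infix (hL : IsLanguage L) {v w : List A} (hw : w ∈ L) (hv : v <:+: w) :
    v ∈ L :=
  hL.1 w hw v hv

lemma depSet_cons_subset (hL : IsLanguage L) (a : A) (w : List A) :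
    depSet L (a :: w) ⊆ depSet L w :=
  fun _ hb => hL.mem_of_infix hb ⟨[a], [], by simp⟩

lemma depSet_eq_empty (hL : IsLanguage L) {w : List A} (hw : w ∉ L) : depSet L w = ∅ :=
  Set.eq_empty_of_forall_notMem fun _ hb => hw (hL.mem_of_infix hb (List.prefix_append _ _).isInfix)

lemma ncard_arrSet_pos [Finite A] (hL : IsLanguage L) {w : List A} (hw : w ∈ L) :
    0 < (arrSet L w).ncard :=
  (Set.ncard_pos).2 (hL.2.1 w hw)

lemma ncard_depSet_pos [Finite A] (hL : IsLanguage L) {w : List A} (hw : w ∈ L) :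
    0 < (depSet L w).ncard :=
  (Set.ncard_pos).2 (hL.2.2 w hw)

lemma RightSpecial.of_cons [Finite A] (hL : IsLanguage L) {a : A} {w : List A}
    (h : RightSpecial L (a :: w)) : RightSpecial L w :=
  h.trans_le (Set.ncard_le_ncard (depSet_cons_subset hL a w))

lemma RightSpecial.of_suffix [Finite A] (hL : IsLanguage L) {v w : List A} (h : RightSpecial L w)
    (hv : v <:+ w) : RightSpecial L v := by
  obtain ⟨u, rfl⟩ := hv
  induction u with
  | nil => exact h
  | cons a u ih => exact ih (h.of_cons hL)

/-- The paper's `#D(w) - 1`; the truncated subtraction makes it `0` for `w ∉ L`. -/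
noncomputable def rightValence (L : Set (List A)) (w : List A) : ℕ := (depSet L w).ncard - 1

lemma rightSpecial_iff_rightValence_pos {w : List A} :
    RightSpecial L w ↔ 0 < rightValence L w := by
  unfold RightSpecial rightValence
  omega

variable [Fintype A]

lemma extCount_eq_sum (w : List A) : extCount L w = ∑ a, (depSet L (a :: w)).ncard := by
  classical
  simp only [extCount, depSet, Set.ncard_eq_toFinset_card', Set.toFinset_ofPred,
    Finset.card_filter, Fintype.sum_prod_type, List.cons_append]

lemma extCount_le_mul (hL : IsLanguage L) (w : List A) :
    extCount L w ≤ (arrSet L w).ncard * (depSet L w).ncard := by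
  rw [← Set.ncard_prod]
  refine Set.ncard_le_ncard (fun p hp => ⟨?_, ?_⟩)
  · exact hL.mem_of_infix hp ⟨[], [p.2], by simp⟩
  · exact hL.mem_of_infix hp ⟨[p.1], [], by simp⟩

lemma extCount_add_one_le (hL : IsLanguage L) (hns : ∀ w, ¬ StrongBispecial L w) {w : List A}
    (hw : w ∈ L) : extCount L w + 1 ≤ (arrSet L w).ncard + (depSet L w).ncard := by
  have harr := ncard_arrSet_pos hL hw
  have hdep := ncard_depSet_pos hL hw
  by_cases hbi : Bispecial L w
  · have := hns w
    simp only [StrongBispecial, hbi, true_and, not_lt] at this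
    omega
  · have hmul := extCount_le_mul hL w
    simp only [Bispecial, not_and_or, not_lt] at hbi
    rcases hbi with h | h <;> nlinarith

lemma sum_rightValence_cons_add_ncard_arrSet (hL : IsLanguage L) (w : List A) :
    ∑ a, rightValence L (a :: w) + (arrSet L w).ncard = extCount L w := by
  classical
  have harr : (arrSet L w).ncard = ∑ a, if a :: w ∈ L then 1 else 0 := by
    rw [← Finset.card_filter, ← Set.ncard_coe_finset]
    congr
    ext
    simp [arrSet]
  rw [extCount_eq_sum, harr, ← Finset.sum_add_distrib]
  refine Finset.sum_congr rfl fun a _ => ?_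
  split_ifs with ha
  · have := ncard_depSet_pos hL ha
    unfold rightValence
    omega
  · simp [rightValence, depSet_eq_empty hL ha]

lemma sum_rightValence_cons_le (hL : IsLanguage L) (hns : ∀ w, ¬ StrongBispecial L w)
    (w : List A) : ∑ a, rightValence L (a :: w) ≤ rightValence L w := by
  by_cases hw : w ∈ L
  · have := sum_rightValence_cons_add_ncard_arrSet hL w
    have := extCount_add_one_le hL hns hw
    unfold rightValence at *
    omega
  · have hcons (a : A) : a :: w ∉ L := fun ha =>
      hw (hL.mem_of_infix ha (List.suffix_cons a w).isInfix)
    simp [rightValence, depSet_eq_empty hL (hcons _)]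

end Language

lemma Nat.exists_forall_ge_eq_of_antitone {f : ℕ → ℕ} (hf : Antitone f) :
    ∃ n₀, ∀ n, n₀ ≤ n → f n = f n₀ :=
  ⟨Function.argmin f, fun _ hn => le_antisymm (hf hn) (Function.argmin_le f _)⟩

section Complexity

variable {L : Set (List A)}

noncomputable def wordsOfLength (A : Type*) [Finite A] (n : ℕ) : Finset (List A) :=
  (List.finite_length_eq A n).toFinset

@[simp] lemma mem_wordsOfLength [Finite A] {n : ℕ} {w : List A} :
    w ∈ wordsOfLength A n ↔ w.length = n := by
  simp [wordsOfLength]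

lemma sum_wordsOfLength_succ [Fintype A] {M : Type*} [AddCommMonoid M] (f : List A → M)
    (n : ℕ) :
    ∑ u ∈ wordsOfLength A (n + 1), f u = ∑ w ∈ wordsOfLength A n, ∑ a, f (a :: w) := by
  rw [← Finset.sum_product']
  symm
  refine Finset.sum_bij (fun p _ => p.2 :: p.1) (fun p hp => ?_) (fun p _ q _ h => ?_)
    (fun u hu => ?_) (fun _ _ => rfl)
  · simpa using (Finset.mem_product.1 hp).1
  · simp only [List.cons.injEq] at h
    exact Prod.ext h.2 h.1
  · cases u with
    | nil => simp at hu
    | cons a w => exact ⟨(w, a), by simpa using hu, rfl⟩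

/-- The paper's `s(n) = p(n+1) - p(n)`. -/
noncomputable def rightValenceSum [Finite A] (L : Set (List A)) (n : ℕ) : ℕ :=
  ∑ w ∈ wordsOfLength A n, rightValence L w

variable [Fintype A]

lemma rightValenceSum_succ (n : ℕ) :
    rightValenceSum L (n + 1) = ∑ w ∈ wordsOfLength A n, ∑ a, rightValence L (a :: w) :=
  sum_wordsOfLength_succ _ n

lemma antitone_rightValenceSum (hL : IsLanguage L) (hns : ∀ w, ¬ StrongBispecial L w) :
    Antitone (rightValenceSum L) :=
  antitone_nat_of_succ_le fun n => by
    rw [rightValenceSum_succ]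
    exact Finset.sum_le_sum fun w _ => sum_rightValence_cons_le hL hns w

lemma exists_sum_rightValence_cons_eq (hL : IsLanguage L) (hns : ∀ w, ¬ StrongBispecial L w) :
    ∃ n₀, ∀ w : List A, n₀ ≤ w.length →
      ∑ a, rightValence L (a :: w) = rightValence L w := by
  obtain ⟨n₀, hn₀⟩ := Nat.exists_forall_ge_eq_of_antitone (antitone_rightValenceSum hL hns)
  refine ⟨n₀, fun w hw => ?_⟩
  have hconst : rightValenceSum L (w.length + 1) = rightValenceSum L w.length := by
    rw [hn₀ _ hw, hn₀ _ (by omega)]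
  rw [rightValenceSum_succ, rightValenceSum] at hconst
  exact (Finset.sum_eq_sum_iff_of_le fun v _ => sum_rightValence_cons_le hL hns v).1 hconst w
    (by simp)

open Classical in
noncomputable def rightSpecialsOfLength (L : Set (List A)) (n : ℕ) : Finset (List A) :=
  (wordsOfLength A n).filter (RightSpecial L)

@[simp] lemma mem_rightSpecialsOfLength {n : ℕ} {w : List A} :
    w ∈ rightSpecialsOfLength L n ↔ w.length = n ∧ RightSpecial L w := by
  simp [rightSpecialsOfLength]

lemma card_rightSpecialsOfLength_le (n : ℕ) :
    (rightSpecialsOfLength L n).card ≤ rightValenceSum L n := by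
  rw [Finset.card_eq_sum_ones]
  calc ∑ _w ∈ rightSpecialsOfLength L n, 1
      ≤ ∑ w ∈ rightSpecialsOfLength L n, rightValence L w :=
        Finset.sum_le_sum fun w hw =>
          rightSpecial_iff_rightValence_pos.1 (mem_rightSpecialsOfLength.1 hw).2
    _ ≤ rightValenceSum L n := Finset.sum_le_sum_of_subset fun w hw => by
        simp [(mem_rightSpecialsOfLength.1 hw).1]

lemma mapsTo_tail_rightSpecialsOfLength (hL : IsLanguage L) (n : ℕ) :
    Set.MapsTo List.tail (rightSpecialsOfLength L (n + 1) : Set (List A))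
      (rightSpecialsOfLength L n) := by
  rintro (_ | ⟨a, w⟩) hw <;> simp only [Finset.mem_coe, mem_rightSpecialsOfLength] at hw ⊢
  · simp at hw
  · exact ⟨by simpa using hw.1, hw.2.of_cons hL⟩

lemma exists_surjOn_tail_rightSpecialsOfLength (hL : IsLanguage L)
    (hns : ∀ w, ¬ StrongBispecial L w) : ∃ n₀, ∀ n, n₀ ≤ n →
      Set.SurjOn List.tail (rightSpecialsOfLength L (n + 1) : Set (List A))
        (rightSpecialsOfLength L n) := by
  obtain ⟨n₀, hn₀⟩ := exists_sum_rightValence_cons_eq hL hns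
  refine ⟨n₀, fun n hn w hw => ?_⟩
  simp only [Finset.mem_coe, mem_rightSpecialsOfLength] at hw
  have hpos := rightSpecial_iff_rightValence_pos.1 hw.2
  rw [← hn₀ w (by omega)] at hpos
  obtain ⟨a, -, ha⟩ := Finset.exists_ne_zero_of_sum_ne_zero hpos.ne'
  refine ⟨a :: w, ?_, rfl⟩
  simpa [hw.1] using rightSpecial_iff_rightValence_pos.2 (Nat.pos_of_ne_zero ha)

lemma exists_injOn_tail_rightSpecialsOfLength (hL : IsLanguage L)
    (hns : ∀ w, ¬ StrongBispecial L w) : ∃ n₂, ∀ n, n₂ ≤ n →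
      Set.InjOn List.tail (rightSpecialsOfLength L (n + 1) : Set (List A)) := by
  obtain ⟨n₀, hsurj⟩ := exists_surjOn_tail_rightSpecialsOfLength hL hns
  have hbound (n : ℕ) : (rightSpecialsOfLength L n).card ≤ rightValenceSum L 0 :=
    (card_rightSpecialsOfLength_le n).trans (antitone_rightValenceSum hL hns (Nat.zero_le n))
  have hmono (n : ℕ) (hn : n₀ ≤ n) :
      (rightSpecialsOfLength L n).card ≤ (rightSpecialsOfLength L (n + 1)).card :=
    Finset.card_le_card_of_surjOn _ (hsurj n hn)
  obtain ⟨d₀, hd₀⟩ := Nat.exists_forall_ge_eq_of_antitone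
    (f := fun d => rightValenceSum L 0 - (rightSpecialsOfLength L (n₀ + d)).card)
    (antitone_nat_of_succ_le fun d => Nat.sub_le_sub_left (hmono (n₀ + d) (by omega)) _)
  refine ⟨n₀ + d₀, fun n hn => ?_⟩
  have hcard : (rightSpecialsOfLength L (n + 1)).card ≤ (rightSpecialsOfLength L n).card := by
    have h₁ := hd₀ (n - n₀) (by omega)
    have h₂ := hd₀ (n + 1 - n₀) (by omega)
    have := hbound n
    have := hbound (n + 1)
    simp only [show n₀ + (n - n₀) = n by omega, show n₀ + (n + 1 - n₀) = n + 1 by omega]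
      at h₁ h₂
    omega
  exact fun u hu v hv => Finset.inj_on_of_surj_on_of_card_le (fun w _ => w.tail)
    (fun w hw => mapsTo_tail_rightSpecialsOfLength hL n hw)
    (fun w hw => by obtain ⟨u, hu, rfl⟩ := hsurj n (by omega) hw; exact ⟨u, hu, rfl⟩)
    hcard hu hv

end Complexity

/-- The paper's key fact: long right special words lie on finitely many left-infinite branches. -/
theorem exists_suffix_of_rightSpecial [Fintype A] {L : Set (List A)} (hL : IsLanguage L)
    (hns : ∀ w, ¬ StrongBispecial L w) :
    ∃ n₂, ∀ u v s : List A, RightSpecial L u → RightSpecial L v → s.length = n₂ →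
      s <:+ u → s <:+ v → u.length ≤ v.length → u <:+ v := by
  obtain ⟨n₂, hinj⟩ := exists_injOn_tail_rightSpecialsOfLength hL hns
  have hunique (n : ℕ) (hn : n₂ ≤ n) : ∀ u v s : List A, RightSpecial L u →
      RightSpecial L v → u.length = n → v.length = n → s.length = n₂ →
      s <:+ u → s <:+ v → u = v := by
    induction n, hn using Nat.le_induction with
    | base => exact fun u v s _ _ hu hv hs hsu hsv =>
        (hsu.eq_of_length (by omega)).symm.trans (hsv.eq_of_length (by omega))
    | succ n hn ih =>
      intro u v s hu hv hul hvl hs hsu hsv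
      have htail : u.tail = v.tail := ih _ _ s (hu.of_suffix hL (List.tail_suffix u))
        (hv.of_suffix hL (List.tail_suffix v)) (by simp [hul]) (by simp [hvl]) hs
        (List.suffix_of_suffix_length_le hsu (List.tail_suffix u) (by simp; omega))
        (List.suffix_of_suffix_length_le hsv (List.tail_suffix v) (by simp; omega))
      exact hinj n hn (by simpa using ⟨hul, hu⟩) (by simpa using ⟨hvl, hv⟩) htail
  refine ⟨n₂, fun u v s hu hv hs hsu hsv hlen => ?_⟩
  have hdrop : v.drop (v.length - u.length) <:+ v := List.drop_suffix _ _
  have hsu' := hsu.length_le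
  rw [hunique u.length (by omega) u _ s hu (hv.of_suffix hL hdrop) rfl (by simp; omega) hs hsu
    (List.suffix_of_suffix_length_le hsv hdrop (by simp; omega))]
  exact hdrop

section Occurrences

open Filter

variable {L : Set (List A)} {x : ℤ → A}

def block (x : ℤ → A) (q : ℤ) (n : ℕ) : List A :=
  List.ofFn fun i : Fin n => x (q + (i : ℕ))

@[simp] lemma length_block (x : ℤ → A) (q : ℤ) (n : ℕ) : (block x q n).length = n := by
  simp [block]

lemma block_add (x : ℤ → A) (q : ℤ) (m n : ℕ) :
    block x q (m + n) = block x q m ++ block x (q + m) n := by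
  simp only [block, List.ofFn_add]
  congr 2 with i
  simp [add_assoc]

lemma block_succ (x : ℤ → A) (q : ℤ) (n : ℕ) :
    block x q (n + 1) = block x q n ++ [x (q + n)] := by
  rw [block_add]
  simp [block]

lemma occursAtZ_block (x : ℤ → A) (q : ℤ) (n : ℕ) : occursAtZ x q (block x q n) := by
  simp [occursAtZ, block]

lemma occursAtZ_iff_block_eq {q : ℤ} {w : List A} : occursAtZ x q w ↔ block x q w.length = w :=
  Iff.rfl

lemma block_mem (hx : x ∈ XL L) (q : ℤ) (n : ℕ) : block x q n ∈ L := hx q n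

lemma mem_of_occursAtZ (hx : x ∈ XL L) {q : ℤ} {w : List A} (h : occursAtZ x q w) : w ∈ L :=
  h ▸ block_mem hx q w.length

lemma exists_occursAtZ_of_infix {q : ℤ} {v w : List A} (h : occursAtZ x q w) (hv : v <:+: w) :
    ∃ r, q ≤ r ∧ occursAtZ x r v := by
  obtain ⟨s, t, rfl⟩ := hv
  rw [occursAtZ_iff_block_eq, List.length_append, List.length_append, block_add, block_add] at h
  obtain ⟨h', -⟩ := List.append_inj h (by simp)
  exact ⟨q + s.length, by omega, (List.append_inj h' (by simp)).2⟩

lemma frequently_occursAtZ_of_infix {v w : List A} (h : ∃ᶠ q in atTop, occursAtZ x q w)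
    (hv : v <:+: w) : ∃ᶠ q in atTop, occursAtZ x q v := by
  rw [frequently_atTop] at h ⊢
  intro N
  obtain ⟨q, hq, hocc⟩ := h N
  obtain ⟨r, hr, hocc'⟩ := exists_occursAtZ_of_infix hocc hv
  exact ⟨r, hq.trans hr, hocc'⟩

lemma exists_frequently_occursAtZ_concat [Finite A] {w : List A}
    (h : ∃ᶠ q in atTop, occursAtZ x q w) :
    ∃ c, ∃ᶠ q in atTop, occursAtZ x q (w ++ [c]) := by
  refine frequently_exists.1 (h.mono fun q hq => ⟨x (q + w.length), ?_⟩)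
  rw [occursAtZ_iff_block_eq, List.length_append, List.length_singleton, block_succ,
    occursAtZ_iff_block_eq.1 hq]

lemma rightSpecial_of_frequently [Finite A] (hx : x ∈ XL L) {q : ℤ} {w : List A} {a : A}
    (hw : ∃ᶠ r in atTop, occursAtZ x r w) (hwa : occursAtZ x q (w ++ [a]))
    (hwa' : ¬∃ᶠ r in atTop, occursAtZ x r (w ++ [a])) : RightSpecial L w := by
  obtain ⟨c, hc⟩ := exists_frequently_occursAtZ_concat hw
  obtain ⟨r, hr⟩ := hc.exists
  refine (Set.one_lt_ncard_iff).2 ⟨a, c, mem_of_occursAtZ hx hwa, mem_of_occursAtZ hx hr, ?_⟩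
  rintro rfl
  exact hwa' hc

lemma tendsto_length_of_not_frequently [Finite A] {f : ℤ → ℕ}
    (hf : ∀ q, ¬∃ᶠ r in atTop, occursAtZ x r (block x q (f q))) : Tendsto f atTop atTop := by
  refine tendsto_atTop.2 fun B => ?_
  have hfin : {w : List A | w.length ≤ B ∧ ¬∃ᶠ r in atTop, occursAtZ x r w}.Finite :=
    (List.finite_length_le A B).subset fun _ hw => hw.1
  filter_upwards [(eventually_all_finite hfin).2 fun w hw => not_frequently.1 hw.2] with q hq
  by_contra! hlt
  exact hq _ ⟨by simpa using hlt.le, hf q⟩ (occursAtZ_block x q (f q))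

end Occurrences

lemma Nat.exists_and_not_succ_of_not {P : ℕ → Prop} (h0 : P 0) {n : ℕ} (hn : ¬ P n) :
    ∃ m, P m ∧ ¬ P (m + 1) := by
  induction n with
  | zero => exact absurd h0 hn
  | succ n ih =>
    by_cases hP : P n
    exacts [⟨n, hP, hn⟩, ih hP]

section Recurrence

open Filter

variable [Fintype A] {L : Set (List A)} {x : ℤ → A}

lemma exists_frequently_occursAtZ_block_succ (hL : IsLanguage L)
    (hns : ∀ w, ¬ StrongBispecial L w) {k : ℤ → ℕ}
    (hRS : ∀ q, RightSpecial L (block x q (k q))) (hk : Tendsto k atTop atTop) :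
    ∃ q, ∃ᶠ r in atTop, occursAtZ x r (block x q (k q + 1)) := by
  obtain ⟨n₂, hkey⟩ := exists_suffix_of_rightSpecial hL hns
  let g (q : ℤ) : List A × A := (block x (q + (k q - n₂ : ℕ)) n₂, x (q + k q))
  have hsuffix (q : ℤ) (hq : n₂ ≤ k q) : (g q).1 <:+ block x q (k q) := by
    conv_rhs => rw [← Nat.sub_add_cancel hq, block_add]
    exact List.suffix_append _ _
  have hfin : {p : List A × A | p.1.length = n₂}.Finite :=
    ((List.finite_length_eq A n₂).prod Set.finite_univ).subset fun p hp => ⟨hp, trivial⟩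
  -- pigeonhole: infinitely many `q` share the suffix of length `n₂` and the next letter
  obtain ⟨⟨s, c⟩, -, hsc⟩ : ∃ p ∈ {p : List A × A | p.1.length = n₂},
      ∃ᶠ q in atTop, g q = p ∧ n₂ ≤ k q :=
    (frequently_exists_finite hfin).1 <| (hk.eventually_ge_atTop n₂).frequently.mono
      fun q hq => ⟨g q, by simp [g], rfl, hq⟩
  obtain ⟨q₀, hg₀, hn₀⟩ := hsc.exists
  refine ⟨q₀, frequently_atTop.2 fun N => ?_⟩
  obtain ⟨q₁, ⟨hg₁, hn₁⟩, hq₁, hk₁⟩ :=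
    (hsc.and_eventually ((eventually_ge_atTop N).and (hk.eventually_ge_atTop (k q₀)))).exists
  simp only [g, Prod.mk.injEq] at hg₀ hg₁
  obtain ⟨t, ht⟩ : block x q₀ (k q₀) <:+ block x q₁ (k q₁) :=
    hkey _ _ s (hRS q₀) (hRS q₁) (by rw [← hg₀.1]; simp) (hg₀.1 ▸ hsuffix q₀ hn₀)
      (hg₁.1 ▸ hsuffix q₁ hn₁) (by simpa using hk₁)
  have hsuffix' : block x q₀ (k q₀ + 1) <:+ block x q₁ (k q₁ + 1) :=
    ⟨t, by rw [block_succ, block_succ, hg₀.2, hg₁.2, ← ht, List.append_assoc]⟩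
  obtain ⟨r, hr, hocc⟩ := exists_occursAtZ_of_infix (occursAtZ_block x q₁ _) hsuffix'.isInfix
  exact ⟨r, hq₁.trans hr, hocc⟩

theorem exists_forall_frequently_occursAtZ (hL : IsLanguage L) (hns : ∀ w, ¬ StrongBispecial L w)
    (hx : x ∈ XL L) :
    ∃ m : ℤ, ∀ w k, m ≤ k → occursAtZ x k w → ∃ᶠ k' in atTop, occursAtZ x k' w := by
  by_contra! h
  have htrans (q : ℤ) : ∃ n, ¬∃ᶠ r in atTop, occursAtZ x r (block x q n) := by
    obtain ⟨w, k, hk, hocc, hw⟩ := h q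
    refine ⟨(k - q).toNat + w.length, fun hfreq =>
      not_frequently.2 hw (frequently_occursAtZ_of_infix hfreq ?_)⟩
    rw [block_add, show q + (k - q).toNat = k by omega, occursAtZ_iff_block_eq.1 hocc]
    exact (List.suffix_append _ _).isInfix
  have hmax (q : ℤ) : ∃ n, (∃ᶠ r in atTop, occursAtZ x r (block x q n)) ∧
      ¬∃ᶠ r in atTop, occursAtZ x r (block x q (n + 1)) :=
    Nat.exists_and_not_succ_of_not (P := fun n => ∃ᶠ r in atTop, occursAtZ x r (block x q n))
      (Frequently.of_forall fun r => by simp [occursAtZ, block]) (htrans q).choose_spec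
  choose k hfreq hk using hmax
  have hRS (q : ℤ) : RightSpecial L (block x q (k q)) :=
    rightSpecial_of_frequently hx (hfreq q) (block_succ x q (k q) ▸ occursAtZ_block x q _)
      (block_succ x q (k q) ▸ hk q)
  have hlen : Tendsto k atTop atTop := by
    have := tendsto_length_of_not_frequently hk
    exact tendsto_atTop.2 fun B => (tendsto_atTop.1 this (B + 1)).mono fun q hq => by omega
  obtain ⟨q, hq⟩ := exists_frequently_occursAtZ_block_succ hL hns hRS hlen
  exact hk q hq

end Recurrence

section Reverse

variable {L : Set (List A)}

lemma IsLanguage.reverse (hL : IsLanguage L) : IsLanguage (List.reverse ⁻¹' L) := by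
  refine ⟨fun w hw v hv => hL.mem_of_infix hw (List.reverse_infix.2 hv), fun w hw => ?_,
    fun w hw => ?_⟩
  · obtain ⟨a, ha⟩ := hL.2.2 _ hw
    exact ⟨a, by simpa using ha⟩
  · obtain ⟨a, ha⟩ := hL.2.1 _ hw
    exact ⟨a, by simpa using ha⟩

lemma arrSet_reverse (w : List A) : arrSet (List.reverse ⁻¹' L) w = depSet L w.reverse := by
  ext; simp [arrSet, depSet]

lemma depSet_reverse (w : List A) : depSet (List.reverse ⁻¹' L) w = arrSet L w.reverse := by
  ext; simp [arrSet, depSet]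

lemma extCount_reverse (w : List A) :
    extCount (List.reverse ⁻¹' L) w = extCount L w.reverse := by
  rw [extCount, extCount, ← Set.ncard_image_of_injective _ Prod.swap_injective]
  congr 1
  ext ⟨a, b⟩
  simp

lemma strongBispecial_reverse_iff {w : List A} :
    StrongBispecial (List.reverse ⁻¹' L) w ↔ StrongBispecial L w.reverse := by
  simp only [StrongBispecial, Bispecial, arrSet_reverse, depSet_reverse, extCount_reverse]
  omega

variable {x : ℤ → A}

lemma block_neg (x : ℤ → A) (q : ℤ) (n : ℕ) :
    block (fun m => x (-m)) q n = (block x (-q - n + 1) n).reverse := by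
  refine List.ext_getElem (by simp) fun i h₁ h₂ => ?_
  simp only [block, List.getElem_ofFn, List.getElem_reverse, List.length_ofFn]
  congr 1
  simp at h₁
  omega

lemma mem_XL_neg (hx : x ∈ XL L) : (fun m => x (-m)) ∈ XL (List.reverse ⁻¹' L) := by
  intro q n
  change block (fun m => x (-m)) q n ∈ List.reverse ⁻¹' L
  rw [Set.mem_preimage, block_neg, List.reverse_reverse]
  exact block_mem hx _ _

lemma occursAtZ_neg_reverse_iff {k k' : ℤ} {w : List A} (h : k + k' + w.length = 1) :
    occursAtZ (fun m => x (-m)) k' w.reverse ↔ occursAtZ x k w := by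
  rw [occursAtZ_iff_block_eq, occursAtZ_iff_block_eq, List.length_reverse, block_neg,
    List.reverse_inj, show -k' - w.length + 1 = k by omega]

end Reverse

/-- without strong bispecials, every `x ∈ X_L` has a right
recurrent infinite suffix `(x_n)_{n ≥ m}` and a left recurrent infinite prefix
`(x_n)_{n ≤ -m}`. -/
theorem stmt13 [Fintype A] (L : Set (List A)) (hL : IsLanguage L)
    (hns : ∀ w : List A, ¬ StrongBispecial L w)
    (x : ℤ → A) (hx : x ∈ XL L) :
    ∃ m : ℕ,
      (∀ (w : List A) (k : ℤ), (m : ℤ) ≤ k → occursAtZ x k w →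
        ∀ N : ℤ, ∃ k' : ℤ, N ≤ k' ∧ occursAtZ x k' w) ∧
      (∀ (w : List A) (k : ℤ), k + w.length ≤ -(m : ℤ) → occursAtZ x k w →
        ∀ N : ℤ, ∃ k' : ℤ, k' ≤ N ∧ occursAtZ x k' w) := by
  obtain ⟨m₁, hright⟩ := exists_forall_frequently_occursAtZ hL hns hx
  obtain ⟨m₂, hleft⟩ := exists_forall_frequently_occursAtZ hL.reverse
    (fun w => strongBispecial_reverse_iff.not.2 (hns w.reverse)) (mem_XL_neg hx)
  refine ⟨max m₁.toNat m₂.toNat, fun w k hk hocc =>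
    Filter.frequently_atTop.1 (hright w k (by omega) hocc), fun w k hk hocc N => ?_⟩
  obtain ⟨r, hr, hocc'⟩ := Filter.frequently_atTop.1
    (hleft w.reverse (-k - w.length + 1) (by omega)
      ((occursAtZ_neg_reverse_iff (by omega)).2 hocc)) (-N - w.length + 1)
  exact ⟨-r - w.length + 1, by omega, (occursAtZ_neg_reverse_iff (by omega)).1 hocc'⟩
end

section
/- Let L be an aperiodic, uniformly recurrent language on alphabet 𝒜 satisfying an ℱ-flipped order condition (ℱ ⊆ 𝒜). If T is a standard ℱ-flipped interval exchange transformation with natural coding L(T) = L, then T is minimal. -/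
open List Set

variable {A : Type*}

variable {F : Finset A}

/-!
Only countably many points of `[0, 1]` fail to have a bi-infinite orbit, so every `y ∈ (0, 1)` is
approximated by points `x` that do. Since `T` is a translation or a flip on each interval, the
cylinder of points whose first `n` steps follow the itinerary of `x` is an interval on which the
first `n` iterates act isometrically. If these cylinders did not shrink to length `< ρ`, the first
`N > 1 / ρ` images of such an interval would be `N` intervals of length `≥ ρ` in `(0, 1)`, two of
which overlap; the overlap makes the itinerary of `x` repeat itself, for ever by pigeonhole over
the pairs of times, so `L` would contain arbitrarily high powers of a word. Uniform recurrence then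
puts a point of any orbit into every such cylinder, hence close to `x`.
-/

open Function

def window (u : ℤ → A) (m : ℤ) (n : ℕ) : List A :=
  List.ofFn fun i : Fin n => u (m + i)

@[simp] lemma length_window (u : ℤ → A) (m : ℤ) (n : ℕ) : (window u m n).length = n :=
  List.length_ofFn

lemma window_add (u : ℤ → A) (m : ℤ) (a b : ℕ) :
    window u m (a + b) = window u m a ++ window u (m + a) b := by
  simp only [window, List.ofFn_add]
  congr 2
  ext i
  simp [add_assoc]

lemma window_mul_eq_flatten {u : ℤ → A} {m : ℤ} {d : ℕ}
    (hper : Periodic (fun j : ℕ => u (m + j)) d) (k : ℕ) :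
    window u m (k * d) = (List.replicate k (window u m d)).flatten := by
  have hshift : ∀ n, window u (m + d) n = window u m n := fun n => by
    simp only [window, List.ofFn_inj]
    ext i
    simpa [add_assoc, add_comm (d : ℤ)] using hper i
  induction k with
  | zero => simp [window]
  | succ k ih => rw [add_mul, one_mul, add_comm, window_add, hshift, ih, List.replicate_succ,
      List.flatten_cons]

lemma exists_window_eq_of_infix {u : ℤ → A} {w : List A} {N : ℕ} (h : w <:+: window u 0 N) :
    ∃ s : ℕ, w = window u s w.length := by
  obtain ⟨s, t, hst⟩ := h
  obtain rfl : N = s.length + w.length + t.length := by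
    simpa [add_assoc] using (congrArg List.length hst).symm
  rw [window_add, window_add] at hst
  refine ⟨s.length, ?_⟩
  simpa using (List.append_inj (List.append_inj hst (by simp)).1 (by simp)).2

lemma LangAperiodic.not_periodic {L : Set (List A)} (hap : LangAperiodic L) {u : ℤ → A}
    (hu : u ∈ XL L) (m : ℤ) (d : ℕ) (hd : d ≠ 0) :
    ¬ Periodic (fun j : ℕ => u (m + j)) d := by
  intro hper
  obtain ⟨k, hk⟩ :=
    hap (window u m d) (hu m d) (by simpa [← List.length_eq_zero_iff] using hd)
  exact hk (window_mul_eq_flatten hper k ▸ hu m (k * d))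

lemma UniformlyRecurrent.exists_shift_eq {L : Set (List A)} (hur : UniformlyRecurrent L)
    {u v : ℤ → A} (hu : u ∈ XL L) (hv : v ∈ XL L) (m : ℤ) (n : ℕ) :
    ∃ s : ℤ, ∀ i < n, u (s + i) = v (m + i) := by
  obtain ⟨N, hN⟩ := hur (window v m n) (hv m n)
  obtain ⟨s, hs⟩ := exists_window_eq_of_infix (hN _ (hu 0 N) (length_window u 0 N))
  rw [length_window] at hs
  refine ⟨s, fun i hi => ?_⟩
  have := congrFun (List.ofFn_inj.1 hs) ⟨i, hi⟩
  simpa using this.symm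

lemma exists_forall_of_antitone {ι : Type*} [Finite ι] {P : ι → ℕ → Prop}
    (hP : ∀ i, Antitone (P i)) (h : ∀ k, ∃ i, P i k) : ∃ i, ∀ k, P i k := by
  by_contra! H
  choose K hK using H
  obtain ⟨M, hM⟩ := Finite.exists_le K
  obtain ⟨i, hi⟩ := h M
  exact hK i (hP i (hM i) hi)

lemma countable_setOf_exists_iterate_notMem {α : Type*} {S V : Set α} {g : α → α}
    (hSV : (S \ V).Countable) (hg : MapsTo g V S)
    (hpre : ∀ s : Set α, s.Countable → (V ∩ g ⁻¹' s).Countable) :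
    {x ∈ S | ∃ k, g^[k] x ∉ V}.Countable := by
  have hle : ∀ k, {x ∈ S | ∃ j ≤ k, g^[j] x ∉ V}.Countable := by
    intro k
    induction k with
    | zero =>
      refine hSV.mono ?_
      rintro x ⟨hxS, j, hj, hjV⟩
      obtain rfl : j = 0 := by omega
      exact ⟨hxS, hjV⟩
    | succ k ih =>
      refine (hSV.union (hpre _ ih)).mono ?_
      rintro x ⟨hxS, j, hj, hjV⟩
      by_cases hxV : x ∈ V
      · obtain ⟨j, rfl⟩ : ∃ i, j = i + 1 :=
          Nat.exists_eq_add_one.2 (Nat.pos_of_ne_zero fun h => hjV (h ▸ hxV))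
        exact Or.inr ⟨hxV, hg hxV, j, by omega, by rwa [← iterate_succ_apply]⟩
      · exact Or.inl ⟨hxS, hxV⟩
  refine (countable_iUnion hle).mono ?_
  rintro x ⟨hxS, k, hk⟩
  exact mem_iUnion.2 ⟨k, hxS, k, le_rfl, hk⟩

lemma exists_int_orbit {α : Type*} {f g : α → α} {V W : Set α}
    (hfg : ∀ y ∈ W, g y ∈ V ∧ f (g y) = y) {x : α}
    (hf : ∀ k, f^[k] x ∈ V) (hg : ∀ k, g^[k] x ∈ W) :
    ∃ p : ℤ → α, p 0 = x ∧ (∀ n, f (p n) = p (n + 1)) ∧ ∀ n, p n ∈ V := by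
  let p : ℤ → α := fun
    | .ofNat k => f^[k] x
    | .negSucc k => g^[k + 1] x
  refine ⟨p, rfl, ?_, ?_⟩
  · rintro (k | _ | k)
    · exact (iterate_succ_apply' f k x).symm
    · exact (hfg x (hg 0)).2
    · exact (congrArg f (iterate_succ_apply' g (k + 1) x)).trans (hfg _ (hg (k + 1))).2
  · rintro (k | k)
    · exact hf k
    · simpa only [p, iterate_succ_apply'] using (hfg _ (hg k)).1

lemma finite_iUnion_Icc_diff_iUnion_Ioo {α ι : Type*} [PartialOrder α] [Finite ι]
    (a b : ι → α) : ((⋃ i, Icc (a i) (b i)) \ ⋃ i, Ioo (a i) (b i)).Finite := by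
  refine (finite_iUnion fun i => (finite_singleton (a i)).insert (b i)).subset ?_
  rintro x ⟨hx, hx'⟩
  obtain ⟨i, hi⟩ := mem_iUnion.1 hx
  refine mem_iUnion.2 ⟨i, ?_⟩
  rw [pair_comm, ← Icc_sdiff_Ioo_same (hi.1.trans hi.2)]
  exact ⟨hi, fun h => hx' (mem_iUnion.2 ⟨i, h⟩)⟩

lemma image_affine_uIcc (s c x y : ℝ) :
    (fun z => s * z + c) '' uIcc x y = uIcc (s * x + c) (s * y + c) := by
  rw [← image_image (· + c) (s * ·), image_const_mul_uIcc, image_add_const_uIcc]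

lemma Set.EqOn.image_uIcc_of_affine {f : ℝ → ℝ} {s c x y : ℝ}
    (h : EqOn f (fun z => s * z + c) (uIcc x y)) : f '' uIcc x y = uIcc (f x) (f y) := by
  rw [h.image_eq, image_affine_uIcc, h left_mem_uIcc, h right_mem_uIcc]

open MeasureTheory in
lemma exists_ne_uIcc_inter_nonempty {ρ : ℝ} {N : ℕ} (hN : 1 < N * ρ) {f g : ℕ → ℝ}
    (hlen : ∀ t < N, ρ ≤ |f t - g t|) (hsub : ∀ t < N, uIcc (f t) (g t) ⊆ Ioo 0 1) :
    ∃ s < N, ∃ t < N, s ≠ t ∧ (uIcc (f s) (g s) ∩ uIcc (f t) (g t)).Nonempty := by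
  set μ := volume.restrict (Ioo (0 : ℝ) 1)
  have hsum : μ univ < ∑ t ∈ Finset.range N, μ (uIcc (f t) (g t)) := calc
    μ univ = 1 := by simp [μ]
    _ < ENNReal.ofReal (N * ρ) := ENNReal.one_lt_ofReal.2 hN
    _ = ∑ _t ∈ Finset.range N, ENNReal.ofReal ρ := by
      rw [ENNReal.ofReal_mul (Nat.cast_nonneg N), ENNReal.ofReal_natCast, Finset.sum_const,
        Finset.card_range, nsmul_eq_mul]
    _ ≤ ∑ t ∈ Finset.range N, μ (uIcc (f t) (g t)) := by
      refine Finset.sum_le_sum fun t ht => ?_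
      have ht := Finset.mem_range.1 ht
      rw [Measure.restrict_apply measurableSet_uIcc, inter_eq_left.2 (hsub t ht),
        Real.volume_interval, abs_sub_comm]
      exact ENNReal.ofReal_le_ofReal (hlen t ht)
  obtain ⟨s, hs, t, ht, hst, hne⟩ := exists_nonempty_inter_of_measure_univ_lt_sum_measure μ
    (fun _ _ => measurableSet_uIcc.nullMeasurableSet) hsum
  exact ⟨s, Finset.mem_range.1 hs, t, Finset.mem_range.1 ht, hst, hne⟩

namespace GIET

variable (G : GIET A F)

def domain : Set ℝ := ⋃ e, Ioo (G.l e) (G.r e)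

def codomain : Set ℝ := ⋃ e, Ioo (G.l' e) (G.r' e)

def IsStandard [DecidableEq A] : Prop :=
  ∀ e, ∃ c : ℝ, ∀ x ∈ Ioo (G.l e) (G.r e), G.T x = (if e ∈ F then -x else x) + c

def cylinder (a : ℕ → A) (n : ℕ) : Set ℝ :=
  {x | ∀ i < n, G.T^[i] x ∈ Ioo (G.l (a i)) (G.r (a i))}

lemma domain_subset : G.domain ⊆ Ioo 0 1 := iUnion_subset G.sub

lemma mapsTo_domain : MapsTo G.T G.domain (Icc 0 1) := by
  intro x hx
  obtain ⟨e, he⟩ := mem_iUnion.1 hx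
  have hTx : G.T x ∈ Ioo (G.l' e) (G.r' e) := G.img e ▸ mem_image_of_mem G.T he
  rw [G.cover']
  exact mem_iUnion.2 ⟨e, Ioo_subset_Icc_self hTx⟩

lemma codomain_subset_image : G.codomain ⊆ G.T '' G.domain := by
  intro y hy
  obtain ⟨e, he⟩ := mem_iUnion.1 hy
  obtain ⟨x, hx, rfl⟩ := (G.img e).symm ▸ he
  exact mem_image_of_mem G.T (mem_iUnion.2 ⟨e, hx⟩)

lemma injOn_Ioo (e : A) : InjOn G.T (Ioo (G.l e) (G.r e)) := by
  by_cases he : e ∈ F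
  · exact (G.dec e he).injOn
  · exact (G.inc e he).injOn

section Finite

variable [Finite A]

lemma countable_domain_inter_preimage {s : Set ℝ} (hs : s.Countable) :
    (G.domain ∩ G.T ⁻¹' s).Countable := by
  rw [domain, iUnion_inter]
  exact countable_iUnion fun e =>
    ((mapsTo_preimage G.T s).mono_left inter_subset_right).countable_of_injOn
      ((G.injOn_Ioo e).mono inter_subset_left) hs

lemma countable_Icc_diff_domain : (Icc 0 1 \ G.domain).Countable := by
  rw [G.cover]
  exact (finite_iUnion_Icc_diff_iUnion_Ioo G.l G.r).countable

lemma countable_Icc_diff_codomain : (Icc 0 1 \ G.codomain).Countable := by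
  rw [G.cover']
  exact (finite_iUnion_Icc_diff_iUnion_Ioo G.l' G.r').countable

/-- Forward, an orbit can only leave the domain through the finitely many endpoints and their
countably many preimages; backward, through the endpoints of the image intervals and their
images. -/
lemma countable_setOf_not_exists_isOrbit :
    {x ∈ Icc 0 1 | ¬ ∃ u p, G.IsOrbit u p ∧ p 0 = x}.Countable := by
  have hinv : ∀ y ∈ G.codomain,
      invFunOn G.T G.domain y ∈ G.domain ∧ G.T (invFunOn G.T G.domain y) = y :=
    fun y hy => invFunOn_pos (G.codomain_subset_image hy)
  have hfwd := countable_setOf_exists_iterate_notMem G.countable_Icc_diff_domain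
    G.mapsTo_domain fun _ => G.countable_domain_inter_preimage
  have hbwd := countable_setOf_exists_iterate_notMem (g := invFunOn G.T G.domain)
    G.countable_Icc_diff_codomain
    (fun y hy => Ioo_subset_Icc_self (G.domain_subset (hinv y hy).1))
    fun s hs => (hs.image G.T).mono fun y (hy : y ∈ _ ∩ _) =>
      show y ∈ G.T '' s from ⟨_, hy.2, (hinv y hy.1).2⟩
  refine (hfwd.union hbwd).mono ?_
  rintro x ⟨hx, hno⟩
  by_contra! hgood
  simp only [mem_union, mem_ofPred_eq, not_or, not_and, not_exists, not_not] at hgood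
  obtain ⟨p, rfl, hp, hpV⟩ := exists_int_orbit hinv (hgood.1 hx) (hgood.2 hx)
  choose u hu using fun n => mem_iUnion.1 (hpV n)
  exact hno ⟨u, p, ⟨hp, hu⟩, rfl⟩

lemma exists_isOrbit_dist_lt {y : ℝ} (hy : y ∈ Ioo 0 1) {ε : ℝ} (hε : 0 < ε) :
    ∃ u p, G.IsOrbit u p ∧ dist (p 0) y < ε := by
  obtain ⟨x, ⟨hxy, hx⟩, hxgood⟩ :=
    (G.countable_setOf_not_exists_isOrbit.dense_compl ℝ).inter_open_nonempty
      (Metric.ball y ε ∩ Ioo 0 1) (Metric.isOpen_ball.inter isOpen_Ioo)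
      ⟨y, Metric.mem_ball_self hε, hy⟩
  simp only [mem_compl_iff, mem_ofPred_eq, not_and, not_not] at hxgood
  obtain ⟨u, p, hp, rfl⟩ := hxgood (Ioo_subset_Icc_self hx)
  exact ⟨u, p, hp, hxy⟩

end Finite

variable {G}

section Orbit

variable {u : ℤ → A} {p : ℤ → ℝ}

lemma IsOrbit.iterate_eq (h : G.IsOrbit u p) (m : ℤ) (k : ℕ) :
    G.T^[k] (p m) = p (m + k) := by
  induction k with
  | zero => simp
  | succ k ih => rw [iterate_succ_apply', ih, h.1, Nat.cast_succ, add_assoc]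

lemma IsOrbit.mem_cylinder (h : G.IsOrbit u p) (m : ℤ) (n : ℕ) :
    p m ∈ G.cylinder (fun i => u (m + i)) n := fun i _ => h.iterate_eq m i ▸ h.2 (m + i)

lemma IsOrbit.mem_XL (h : G.IsOrbit u p) : u ∈ XL G.lang :=
  fun m n => ⟨u, p, h, m, by rw [List.ofFn_congr (List.length_ofFn)]; rfl⟩

end Orbit

variable [DecidableEq A]

lemma IsStandard.exists_eqOn_affine (hG : G.IsStandard) (e : A) :
    ∃ s c : ℝ, |s| = 1 ∧ EqOn G.T (fun x => s * x + c) (Ioo (G.l e) (G.r e)) := by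
  obtain ⟨c, hc⟩ := hG e
  by_cases he : e ∈ F
  · exact ⟨-1, c, by simp, fun x hx => by simp [hc x hx, he]⟩
  · exact ⟨1, c, by simp, fun x hx => by simp [hc x hx, he]⟩

lemma IsStandard.exists_eqOn_affine_iterate (hG : G.IsStandard) {S : Set ℝ} {a : ℕ → A}
    {t : ℕ} (h : ∀ j < t, MapsTo G.T^[j] S (Ioo (G.l (a j)) (G.r (a j)))) :
    ∃ s c : ℝ, |s| = 1 ∧ EqOn G.T^[t] (fun x => s * x + c) S := by
  induction t with
  | zero => exact ⟨1, 0, by simp, fun x _ => by simp⟩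
  | succ t ih =>
    obtain ⟨s, c, hs, hst⟩ := ih fun j hj => h j (by omega)
    obtain ⟨s', c', hs', hT⟩ := hG.exists_eqOn_affine (a t)
    refine ⟨s' * s, s' * c + c', by rw [abs_mul, hs, hs', one_mul], fun x hx => ?_⟩
    rw [iterate_succ_apply', hT (h t t.lt_succ_self hx), hst hx]
    ring

lemma IsStandard.ordConnected_cylinder (hG : G.IsStandard) (a : ℕ → A) (n : ℕ) :
    (G.cylinder a n).OrdConnected := by
  refine ordConnected_iff_uIcc_subset.2 fun x hx y hy => ?_
  suffices ∀ t ≤ n, ∀ j < t, MapsTo G.T^[j] (uIcc x y) (Ioo (G.l (a j)) (G.r (a j))) from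
    fun z hz i hi => this n le_rfl i hi hz
  intro t
  induction t with
  | zero => simp
  | succ t ih =>
    intro ht j hj
    rcases Nat.lt_succ_iff_lt_or_eq.1 hj with hj | rfl
    · exact ih (by omega) j hj
    obtain ⟨s, c, -, hst⟩ := hG.exists_eqOn_affine_iterate (ih (by omega))
    rw [mapsTo_iff_image_subset, hst.image_uIcc_of_affine]
    exact ordConnected_Ioo.uIcc_subset (hx j (by omega)) (hy j (by omega))

lemma IsStandard.exists_eqOn_affine_iterate_cylinder (hG : G.IsStandard) {a : ℕ → A}
    {n t : ℕ} (ht : t ≤ n) :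
    ∃ s c : ℝ, |s| = 1 ∧ EqOn G.T^[t] (fun x => s * x + c) (G.cylinder a n) :=
  hG.exists_eqOn_affine_iterate fun j hj _ hz => hz j (by omega)

lemma IsStandard.abs_iterate_sub (hG : G.IsStandard) {a : ℕ → A} {n t : ℕ} {x y : ℝ}
    (hx : x ∈ G.cylinder a n) (hy : y ∈ G.cylinder a n) (ht : t ≤ n) :
    |G.T^[t] x - G.T^[t] y| = |x - y| := by
  obtain ⟨s, c, hs, h⟩ := hG.exists_eqOn_affine_iterate_cylinder (a := a) ht
  rw [h hx, h hy, show s * x + c - (s * y + c) = s * (x - y) by ring, abs_mul, hs, one_mul]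

lemma IsStandard.image_iterate_uIcc (hG : G.IsStandard) {a : ℕ → A} {n t : ℕ} {x y : ℝ}
    (hx : x ∈ G.cylinder a n) (hy : y ∈ G.cylinder a n) (ht : t ≤ n) :
    G.T^[t] '' uIcc x y = uIcc (G.T^[t] x) (G.T^[t] y) := by
  obtain ⟨s, c, -, h⟩ := hG.exists_eqOn_affine_iterate_cylinder (a := a) ht
  exact (h.mono ((hG.ordConnected_cylinder a n).uIcc_subset hx hy)).image_uIcc_of_affine

/-- A common point of the two images is reached from the segment `[x, y]`, which lies in the
cylinder, both after `s` and after `t` steps. -/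
lemma IsStandard.eq_of_inter_nonempty (hG : G.IsStandard) {a : ℕ → A} {n : ℕ} {x y : ℝ}
    (hx : x ∈ G.cylinder a n) (hy : y ∈ G.cylinder a n) {s t k : ℕ} (hs : s + k < n)
    (ht : t + k < n)
    (h : (uIcc (G.T^[s] x) (G.T^[s] y) ∩ uIcc (G.T^[t] x) (G.T^[t] y)).Nonempty) :
    ∀ j ≤ k, a (s + j) = a (t + j) := by
  obtain ⟨z, hzs, hzt⟩ := h
  rw [← hG.image_iterate_uIcc hx hy (by omega)] at hzs hzt
  obtain ⟨x', hx', rfl⟩ := hzs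
  obtain ⟨y', hy', hxy'⟩ := hzt
  have hseg := (hG.ordConnected_cylinder a n).uIcc_subset hx hy
  intro j hj
  by_contra hne
  refine disjoint_left.1 (G.disj _ _ hne) (hseg hx' (s + j) (by omega)) ?_
  rw [add_comm s j, iterate_add_apply, ← hxy', ← iterate_add_apply, add_comm j t]
  exact hseg hy' (t + j) (by omega)

/-- The images of the segment `[x, y]` under the first `N` iterates all have length `|x - y|`
and lie in `(0, 1)`; once `N |x - y| > 1` two of them must meet. -/
lemma IsStandard.exists_agree_of_le_abs_sub (hG : G.IsStandard) {a : ℕ → A} {N k : ℕ}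
    {ρ : ℝ} (hN : 1 < N * ρ) {x y : ℝ} (hx : x ∈ G.cylinder a (N + k))
    (hy : y ∈ G.cylinder a (N + k)) (hxy : ρ ≤ |x - y|) :
    ∃ s t, s < t ∧ t < N ∧ ∀ j ≤ k, a (s + j) = a (t + j) := by
  obtain ⟨s, hs, t, ht, hst, hne⟩ := exists_ne_uIcc_inter_nonempty hN
    (f := fun t => G.T^[t] x) (g := fun t => G.T^[t] y)
    (fun t ht => (hG.abs_iterate_sub (t := t) hx hy (by omega)).symm ▸ hxy)
    (fun t ht => (ordConnected_Ioo.uIcc_subset (hx t (by omega)) (hy t (by omega))).trans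
      (G.sub _))
  rcases hst.lt_or_gt with h | h
  · exact ⟨s, t, h, ht, hG.eq_of_inter_nonempty hx hy (by omega) (by omega) hne⟩
  · exact ⟨t, s, h, hs, hG.eq_of_inter_nonempty hx hy (by omega) (by omega)
      (inter_comm _ _ ▸ hne)⟩

lemma IsStandard.exists_cylinder_abs_sub_lt (hG : G.IsStandard) {u : ℤ → A}
    (hu : ∀ (m : ℤ) (d : ℕ), d ≠ 0 → ¬ Periodic (fun j : ℕ => u (m + j)) d) (m : ℤ)
    {ρ : ℝ} (hρ : 0 < ρ) : ∃ n, ∀ x ∈ G.cylinder (fun i : ℕ => u (m + i)) n,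
      ∀ y ∈ G.cylinder (fun i : ℕ => u (m + i)) n, |x - y| < ρ := by
  by_contra! h
  obtain ⟨N, hN⟩ := exists_nat_gt (1 / ρ)
  rw [div_lt_iff₀ hρ] at hN
  have hpair : ∀ k, ∃ q : Fin N × Fin N, (q.1 : ℕ) < q.2 ∧
      ∀ j ≤ k, u (m + (q.1 + j : ℕ)) = u (m + (q.2 + j : ℕ)) := by
    intro k
    obtain ⟨x, hx, y, hy, hxy⟩ := h (N + k)
    obtain ⟨s, t, hst, htN, hagree⟩ := hG.exists_agree_of_le_abs_sub hN hx hy hxy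
    exact ⟨(⟨s, hst.trans htN⟩, ⟨t, htN⟩), hst, hagree⟩
  obtain ⟨⟨s, t⟩, hst⟩ := exists_forall_of_antitone
    (fun _ _ _ hkk' hq => ⟨hq.1, fun j hj => hq.2 j (hj.trans hkk')⟩) hpair
  have hlt : (s : ℕ) < t := (hst 0).1
  refine hu (m + s) (t - s) (by omega) fun j => ?_
  have hj := (hst j).2 j le_rfl
  push_cast [Nat.cast_sub hlt.le] at hj ⊢
  rw [show m + s + (j + (t - s)) = m + (t + j) by ring, add_assoc, hj]

end GIET

theorem stmt18_general [Fintype A] [DecidableEq A] (F : Finset A) (G : GIET A F)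
    (hstd : ∀ e, ∃ c : ℝ, ∀ x ∈ Set.Ioo (G.l e) (G.r e),
      G.T x = (if e ∈ F then -x else x) + c)
    (L : Set (List A))
    (hap : LangAperiodic L) (hur : UniformlyRecurrent L)
    (hcode : G.lang = L) :
    ∀ p : ℤ → ℝ, (∀ n : ℤ, G.T (p n) = p (n + 1)) →
      (∀ n : ℤ, ∃ e, p n ∈ Set.Ioo (G.l e) (G.r e)) →
      ∀ y ∈ Set.Ioo (0 : ℝ) 1, y ∈ closure (Set.range p) := by
  intro p hp hpI y hy
  choose u hu using hpI
  have horb : G.IsOrbit u p := ⟨hp, hu⟩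
  refine Metric.mem_closure_iff.2 fun ε hε => ?_
  obtain ⟨v, q, hq, hqy⟩ := G.exists_isOrbit_dist_lt hy (half_pos hε)
  have hvL : v ∈ XL L := hcode ▸ hq.mem_XL
  obtain ⟨n, hn⟩ := GIET.IsStandard.exists_cylinder_abs_sub_lt hstd (hap.not_periodic hvL) 0
    (half_pos hε)
  obtain ⟨s, hs⟩ := hur.exists_shift_eq (hcode ▸ horb.mem_XL) hvL 0 n
  have hps : p s ∈ G.cylinder (fun i : ℕ => v (0 + i)) n := fun i hi => by
    simpa only [hs i hi] using horb.mem_cylinder s n i hi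
  refine ⟨p s, mem_range_self s, ?_⟩
  calc dist y (p s) ≤ dist (q 0) y + dist (q 0) (p s) := dist_triangle_left _ _ _
    _ < ε / 2 + ε / 2 := add_lt_add hqy (hn _ (hq.mem_cylinder 0 n) _ hps)
    _ = ε := add_halves ε

/-- if an aperiodic, uniformly recurrent language `L` satisfying
an `F`-flipped order condition is the natural coding of a standard `F`-flipped
interval exchange transformation `T`, then `T` is minimal: every bi-infinite
orbit is dense in `(0,1)`. -/
theorem stmt18 [Fintype A] [DecidableEq A] (F : Finset A) (G : GIET A F)
    (hstd : ∀ e, ∃ c : ℝ, ∀ x ∈ Set.Ioo (G.l e) (G.r e),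
      G.T x = (if e ∈ F then -x else x) + c)
    (L : Set (List A)) (hL : IsLanguage L)
    (hap : LangAperiodic L) (hur : UniformlyRecurrent L)
    (rA rD : A → A → Prop)
    (hA : IsStrictTotalOrder A rA) (hD : IsStrictTotalOrder A rD)
    (hoc : FlippedOC L F rA rD)
    (hcode : G.lang = L) :
    ∀ p : ℤ → ℝ, (∀ n : ℤ, G.T (p n) = p (n + 1)) →
      (∀ n : ℤ, ∃ e, p n ∈ Set.Ioo (G.l e) (G.r e)) →
      ∀ y ∈ Set.Ioo (0 : ℝ) 1, y ∈ closure (Set.range p) :=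
  stmt18_general F G hstd L hap hur hcode
end
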